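/- arXiv:1308.0539 — 5 statements merged into one kernel-verified Lean document; each statement's English description precedes it below -/
import Mathlib

section
/- For any four-party pure quantum state |ψ⟩ on H_A ⊗ H_B ⊗ H_C ⊗ H_D, the rank of the reduced density matrix on A is at most the product of the ranks of the reduced density matrices on AB and on AC: r_A ≤ r_{AB} · r_{AC}. -/
/-!
Pick `r_AC` columns `ψ(·, b, ·, d)` of the `AC : BD` flattening spanning its column space.
Evaluating at a fixed `c` is linear, so every column `ψ(·, b, c, d)` of the `A : BCD` flattening
lies in the sum, over the chosen `(b, d)`, of the spans of the slices `ψ(·, b, c', d)`. Each of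
these spans is the column space of a submatrix of the `AB : CD` flattening, so it has dimension at
most `r_AB`.
-/

open Matrix Module Submodule Set

theorem Submodule.exists_finset_subset_card_eq_finrank_span {K V : Type*} [Field K]
    [AddCommGroup V] [Module K V] {t : Set V} (ht : t.Finite) :
    ∃ s : Finset V, ↑s ⊆ t ∧ s.card = finrank K (span K t) ∧ span K (s : Set V) = span K t := by
  obtain ⟨b, hbt, hspan, hli⟩ := exists_linearIndependent K t
  have hb := ht.subset hbt
  refine ⟨hb.toFinset, by simpa using hbt, ?_, by simpa using hspan⟩
  rw [← hspan, ← finrank_span_finset_eq_card (by rwa [hb.coe_toFinset]), hb.coe_toFinset]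

theorem Submodule.finrank_finset_sup_le {K V ι : Type*} [Field K] [AddCommGroup V] [Module K V]
    [FiniteDimensional K V] (s : Finset ι) (p : ι → Submodule K V) :
    finrank K ↥(s.sup p) ≤ ∑ i ∈ s, finrank K (p i) := by
  classical
  induction s using Finset.induction_on with
  | empty => simp
  | insert i s hi ih =>
    rw [Finset.sup_insert, Finset.sum_insert hi]
    exact (finrank_add_le_finrank_add_finrank _ _).trans (Nat.add_le_add_left ih _)

namespace Matrix

variable {K A B C D : Type*} [Field K]

def flattenA (ψ : A → B → C → D → K) : Matrix A (B × C × D) K :=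
  of fun a x => ψ a x.1 x.2.1 x.2.2

def flattenAB (ψ : A → B → C → D → K) : Matrix (A × B) (C × D) K :=
  of fun p x => ψ p.1 p.2 x.1 x.2

def flattenAC (ψ : A → B → C → D → K) : Matrix (A × C) (B × D) K :=
  of fun p x => ψ p.1 x.1 p.2 x.2

def sliceSpan (f : A × C → K) : Submodule K (A → K) :=
  span K (range fun c a => f (a, c))

theorem finrank_sliceSpan_le_rank_flattenAB [Fintype C] [Fintype D] (ψ : A → B → C → D → K)
    {f : A × C → K} (hf : f ∈ range (flattenAC ψ).col) :
    finrank K (sliceSpan f) ≤ (flattenAB ψ).rank := by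
  obtain ⟨⟨b, d⟩, rfl⟩ := hf
  calc finrank K (sliceSpan ((flattenAC ψ).col (b, d)))
      = ((flattenAB ψ).submatrix (fun a => (a, b)) (fun c => (c, d))).rank :=
        (rank_eq_finrank_span_cols _).symm
    _ ≤ (flattenAB ψ).rank := rank_submatrix_le _ _ _

theorem col_flattenA_mem_finset_sup_sliceSpan (ψ : A → B → C → D → K) {s : Finset (A × C → K)}
    (hs : span K (s : Set (A × C → K)) = span K (range (flattenAC ψ).col)) (x : B × C × D) :
    (flattenA ψ).col x ∈ s.sup sliceSpan := by
  obtain ⟨b, c, d⟩ := x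
  let sliceAt : (A × C → K) →ₗ[K] A → K := LinearMap.funLeft K K fun a => (a, c)
  have hcol : (flattenAC ψ).col (b, d) ∈ span K (s : Set (A × C → K)) :=
    hs ▸ subset_span (mem_range_self _)
  have hslices : span K (sliceAt '' s) ≤ s.sup sliceSpan := by
    refine span_le.2 ?_
    rintro _ ⟨f, hf, rfl⟩
    exact Finset.le_sup (f := sliceSpan) hf (subset_span ⟨c, rfl⟩)
  exact hslices (map_span sliceAt _ ▸ mem_map_of_mem hcol)

end Matrix

theorem rank_A_le_rank_AB_mul_rank_AC_general
    {A B C D : Type*} [Fintype A] [Fintype B] [Fintype C] [Fintype D]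
    (ψ : A → B → C → D → ℂ) :
    (Matrix.of fun (a : A) (x : B × C × D) => ψ a x.1 x.2.1 x.2.2).rank ≤
      (Matrix.of fun (p : A × B) (x : C × D) => ψ p.1 p.2 x.1 x.2).rank *
      (Matrix.of fun (p : A × C) (x : B × D) => ψ p.1 x.1 p.2 x.2).rank := by
  change (flattenA ψ).rank ≤ (flattenAB ψ).rank * (flattenAC ψ).rank
  obtain ⟨s, hs_sub, hs_card, hs_span⟩ :=
    exists_finset_subset_card_eq_finrank_span (K := ℂ) (finite_range (flattenAC ψ).col)
  calc (flattenA ψ).rank = finrank ℂ (span ℂ (range (flattenA ψ).col)) :=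
        rank_eq_finrank_span_cols _
    _ ≤ finrank ℂ ↥(s.sup sliceSpan) :=
        Submodule.finrank_mono <| span_le.2 <| range_subset_iff.2 <|
          col_flattenA_mem_finset_sup_sliceSpan ψ hs_span
    _ ≤ ∑ f ∈ s, finrank ℂ (sliceSpan f) := finrank_finset_sup_le _ _
    _ ≤ ∑ _f ∈ s, (flattenAB ψ).rank :=
        Finset.sum_le_sum fun f hf => finrank_sliceSpan_le_rank_flattenAB ψ (hs_sub hf)
    _ = (flattenAB ψ).rank * (flattenAC ψ).rank := by
        rw [Finset.sum_const, smul_eq_mul, hs_card, ← rank_eq_finrank_span_cols, mul_comm]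

/-- For a four-party pure state `ψ` on `H_A ⊗ H_B ⊗ H_C ⊗ H_D` (represented as a
nonzero tensor of coefficients), the Schmidt rank across `A : BCD` is at most the
product of the Schmidt ranks across `AB : CD` and `AC : BD`, i.e. `r_A ≤ r_AB · r_AC`. -/
theorem rank_A_le_rank_AB_mul_rank_AC
    {A B C D : Type*} [Fintype A] [Fintype B] [Fintype C] [Fintype D]
    (ψ : A → B → C → D → ℂ) (hψ : ψ ≠ 0) :
    (Matrix.of fun (a : A) (x : B × C × D) => ψ a x.1 x.2.1 x.2.2).rank ≤
      (Matrix.of fun (p : A × B) (x : C × D) => ψ p.1 p.2 x.1 x.2).rank *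
      (Matrix.of fun (p : A × C) (x : B × D) => ψ p.1 x.1 p.2 x.2).rank :=
  rank_A_le_rank_AB_mul_rank_AC_general ψ
end

section
/- Strong subadditivity fails for the 0-Rényi entropy (log of rank): there exists a four-party pure state |ψ⟩_{ABCD} with r_A = 2, r_{AB} = r_{AC} = 3, and r_{ABC} = 5, so that S_0(A) + S_0(ABC) > S_0(AB) + S_0(AC). Specifically, any purification of ρ_{ABC} = (1/5)(|000⟩⟨000| + |100⟩⟨100| + |101⟩⟨101| + |110⟩⟨110| + |111⟩⟨111|) works. -/
/-!
Take `ψ = 5^{-1/2} ∑_d |t d⟩|d⟩`, where `t` lists the five basis states in the support of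
`ρ_ABC`. Since `t` is injective, `ψ` purifies `ρ_ABC`. In each of the four cuts the column index
contains `d`, which determines `abc`; so every column of the reshaped matrix has at most one
nonzero entry, and its rank is the number of row labels that occur in the support: `{0, 1}` for
`A`, `{00, 10, 11}` for both `AB` and `AC`, and all five states for `ABC`.
Finally `3 · 3 < 2 · 5`.
-/

open Matrix

namespace Matrix

variable {m n K : Type*} [Fintype m] [Fintype n] [DecidableEq m] [Field K]

theorem rank_of_ite_of_unique_row {r : m → n → Prop} [∀ i j, Decidable (r i j)]
    (hr : ∀ i i' j, r i j → r i' j → i = i') {c : K} (hc : c ≠ 0) :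
    (of fun i j => if r i j then c else 0).rank = Fintype.card {i // ∃ j, r i j} := by
  set M : Matrix m n K := of fun i j => if r i j then c else 0
  apply le_antisymm
  · calc M.rank ≤ (Finset.univ.filter fun i => ∃ j, r i j).card := by
          refine M.rank_le_card_of_support_subset _ fun i hi => ?_
          by_contra hi'
          refine hi (funext fun j => if_neg ?_)
          simp_all
      _ = _ := (Fintype.card_subtype _).symm
  · choose col hcol using fun i : {i // ∃ j, r i j} => i.2
    have hsub : M.submatrix Subtype.val col = c • (1 : Matrix {i // ∃ j, r i j} _ K) := by
      ext i i'
      by_cases h : i = i'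
      · simp [M, h, hcol]
      · have hne : ¬r i (col i') := fun hi => h (Subtype.ext (hr _ _ _ hi (hcol i')))
        simp [M, hne, one_apply_ne h]
    calc Fintype.card {i // ∃ j, r i j}
        = (c • (1 : Matrix {i // ∃ j, r i j} _ K)).rank := by
          rw [rank_smul_of_mem_nonZeroDivisors _ (mem_nonZeroDivisors_of_ne_zero hc), rank_one]
      _ ≤ M.rank := hsub ▸ rank_submatrix_le _ _ _

end Matrix

theorem sum_ite_mul_star_ite {X D R : Type*} [Fintype D] [DecidableEq X] [Semiring R] [StarRing R]
    {t : D → X} (ht : t.Injective) (s : R) (x x' : X) :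
    ∑ d, (if x = t d then s else 0) * star (if x' = t d then s else 0) =
      if x = x' ∧ ∃ d, t d = x then s * star s else 0 := by
  by_cases hx : ∃ d, t d = x
  · obtain ⟨d₀, rfl⟩ := hx
    rw [Fintype.sum_eq_single d₀ fun d hd => by rw [if_neg (ht.ne hd).symm, zero_mul], if_pos rfl]
    by_cases hx' : x' = t d₀
    · simp [hx']
    · simp [hx', Ne.symm hx']
  · rw [if_neg fun h => hx h.2]
    exact Finset.sum_eq_zero fun d _ => by rw [if_neg fun h => hx ⟨d, h.symm⟩, zero_mul]

theorem inv_sqrt_five_ne_zero : ((Real.sqrt 5 : ℝ) : ℂ)⁻¹ ≠ 0 := by simp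

theorem inv_sqrt_five_mul_star :
    ((Real.sqrt 5 : ℝ) : ℂ)⁻¹ * star ((Real.sqrt 5 : ℝ) : ℂ)⁻¹ = 5⁻¹ := by
  rw [star_inv₀, Complex.star_def, Complex.conj_ofReal, ← mul_inv, ← Complex.ofReal_mul,
    Real.mul_self_sqrt (by norm_num)]
  norm_num

def rhoSupport : Fin 5 → Fin 2 × Fin 2 × Fin 2 :=
  ![(0, 0, 0), (1, 0, 0), (1, 0, 1), (1, 1, 0), (1, 1, 1)]

theorem rhoSupport_injective : rhoSupport.Injective := by decide

theorem exists_rhoSupport_eq_iff (x : Fin 2 × Fin 2 × Fin 2) :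
    (∃ d, rhoSupport d = x) ↔
      x = (0, 0, 0) ∨ x = (1, 0, 0) ∨ x = (1, 0, 1) ∨ x = (1, 1, 0) ∨ x = (1, 1, 1) := by
  revert x
  decide

noncomputable def purification (a b c : Fin 2) (d : Fin 5) : ℂ :=
  if (a, b, c) = rhoSupport d then ((Real.sqrt 5 : ℝ) : ℂ)⁻¹ else 0

theorem purification_gram (a b c a' b' c' : Fin 2) :
    (∑ d : Fin 5, purification a b c d * star (purification a' b' c' d)) =
      (if (a, b, c) = (a', b', c') ∧
          ((a, b, c) = (0, 0, 0) ∨ (a, b, c) = (1, 0, 0) ∨ (a, b, c) = (1, 0, 1) ∨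
            (a, b, c) = (1, 1, 0) ∨ (a, b, c) = (1, 1, 1))
        then (5 : ℂ)⁻¹ else 0) := by
  simp only [purification]
  rw [sum_ite_mul_star_ite rhoSupport_injective, inv_sqrt_five_mul_star]
  simp only [exists_rhoSupport_eq_iff]

theorem rank_purification_A : (Matrix.of fun (a : Fin 2) (x : Fin 2 × Fin 2 × Fin 5) =>
    purification a x.1 x.2.1 x.2.2).rank = 2 := by
  have hr : ∀ (a a' : Fin 2) (x : Fin 2 × Fin 2 × Fin 5), (a, x.1, x.2.1) = rhoSupport x.2.2 →
      (a', x.1, x.2.1) = rhoSupport x.2.2 → a = a' := by decide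
  have hcard : Fintype.card {a : Fin 2 // ∃ x : Fin 2 × Fin 2 × Fin 5,
      (a, x.1, x.2.1) = rhoSupport x.2.2} = 2 := by decide
  exact (rank_of_ite_of_unique_row hr inv_sqrt_five_ne_zero).trans hcard

theorem rank_purification_AB : (Matrix.of fun (p : Fin 2 × Fin 2) (x : Fin 2 × Fin 5) =>
    purification p.1 p.2 x.1 x.2).rank = 3 := by
  have hr : ∀ (p p' : Fin 2 × Fin 2) (x : Fin 2 × Fin 5), (p.1, p.2, x.1) = rhoSupport x.2 →
      (p'.1, p'.2, x.1) = rhoSupport x.2 → p = p' := by decide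
  have hcard : Fintype.card {p : Fin 2 × Fin 2 // ∃ x : Fin 2 × Fin 5,
      (p.1, p.2, x.1) = rhoSupport x.2} = 3 := by decide
  exact (rank_of_ite_of_unique_row hr inv_sqrt_five_ne_zero).trans hcard

theorem rank_purification_AC : (Matrix.of fun (p : Fin 2 × Fin 2) (x : Fin 2 × Fin 5) =>
    purification p.1 x.1 p.2 x.2).rank = 3 := by
  have hr : ∀ (p p' : Fin 2 × Fin 2) (x : Fin 2 × Fin 5), (p.1, x.1, p.2) = rhoSupport x.2 →
      (p'.1, x.1, p'.2) = rhoSupport x.2 → p = p' := by decide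
  have hcard : Fintype.card {p : Fin 2 × Fin 2 // ∃ x : Fin 2 × Fin 5,
      (p.1, x.1, p.2) = rhoSupport x.2} = 3 := by decide
  exact (rank_of_ite_of_unique_row hr inv_sqrt_five_ne_zero).trans hcard

theorem rank_purification_ABC : (Matrix.of fun (p : Fin 2 × Fin 2 × Fin 2) (d : Fin 5) =>
    purification p.1 p.2.1 p.2.2 d).rank = 5 := by
  have hr : ∀ (p p' : Fin 2 × Fin 2 × Fin 2) (d : Fin 5), (p.1, p.2.1, p.2.2) = rhoSupport d →
      (p'.1, p'.2.1, p'.2.2) = rhoSupport d → p = p' := by decide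
  have hcard : Fintype.card {p : Fin 2 × Fin 2 × Fin 2 // ∃ d : Fin 5,
      (p.1, p.2.1, p.2.2) = rhoSupport d} = 5 := by decide
  exact (rank_of_ite_of_unique_row hr inv_sqrt_five_ne_zero).trans hcard

theorem log_three_add_log_three_lt : Real.log 3 + Real.log 3 < Real.log 2 + Real.log 5 := by
  rw [← Real.log_mul (by norm_num) (by norm_num), ← Real.log_mul (by norm_num) (by norm_num)]
  exact Real.log_lt_log (by norm_num) (by norm_num)

/-- Strong subadditivity fails for the 0-Rényi entropy: there is a four-party pure
state `ψ` (a purification of the mixture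
`ρ_ABC = (1/5)(|000⟩⟨000| + |100⟩⟨100| + |101⟩⟨101| + |110⟩⟨110| + |111⟩⟨111|)`)
with `r_A = 2`, `r_AB = r_AC = 3`, `r_ABC = 5`, hence
`S₀(A) + S₀(ABC) > S₀(AB) + S₀(AC)`. -/
theorem zero_renyi_ssa_fails :
    ∃ ψ : Fin 2 → Fin 2 → Fin 2 → Fin 5 → ℂ,
      (∀ a b c a' b' c' : Fin 2,
        (∑ d : Fin 5, ψ a b c d * star (ψ a' b' c' d)) =
          (if (a, b, c) = (a', b', c') ∧
              ((a, b, c) = (0, 0, 0) ∨ (a, b, c) = (1, 0, 0) ∨ (a, b, c) = (1, 0, 1) ∨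
                (a, b, c) = (1, 1, 0) ∨ (a, b, c) = (1, 1, 1))
            then (5 : ℂ)⁻¹ else 0)) ∧
      (Matrix.of fun (a : Fin 2) (x : Fin 2 × Fin 2 × Fin 5) =>
        ψ a x.1 x.2.1 x.2.2).rank = 2 ∧
      (Matrix.of fun (p : Fin 2 × Fin 2) (x : Fin 2 × Fin 5) =>
        ψ p.1 p.2 x.1 x.2).rank = 3 ∧
      (Matrix.of fun (p : Fin 2 × Fin 2) (x : Fin 2 × Fin 5) =>
        ψ p.1 x.1 p.2 x.2).rank = 3 ∧
      (Matrix.of fun (p : Fin 2 × Fin 2 × Fin 2) (d : Fin 5) =>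
        ψ p.1 p.2.1 p.2.2 d).rank = 5 ∧
      Real.log 3 + Real.log 3 < Real.log 2 + Real.log 5 := by
  exact ⟨purification, purification_gram, rank_purification_A, rank_purification_AB,
    rank_purification_AC, rank_purification_ABC, log_three_add_log_three_lt⟩
end

section
/- For any three positive integers a ≤ b ≤ c satisfying c ≤ a·b, there exists a tripartite pure state |ψ⟩_{ABC} with Schmidt ranks r_A = a, r_B = b, r_{AB} = c (where r_{AB} is the rank across the AB : C bipartition). -/
/-!
Let `e : [c] ↪ [a] × [b]` have both coordinate maps surjective, and take
`ψ = ∑_z |(e z).1⟩ ⊗ |(e z).2⟩ ⊗ |z⟩`. Each of the three flattenings of `ψ` then contains an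
identity submatrix of size `a`, `b`, `c` respectively, which pins down its rank. Such an `e`
exists when `b ≤ c ≤ ab`: its range is any `c`-element subset of `[a] × [b]` containing the
graph of a surjection `[b] → [a]`.
-/

open Matrix

namespace Matrix

variable {m n R : Type*} [CommSemiring R] [StrongRankCondition R]

theorem rank_eq_card_height_of_submatrix_eq_one [Fintype m] [Fintype n] [DecidableEq m]
    (A : Matrix m n R) (σ : m → n) (h : A.submatrix id σ = 1) : A.rank = Fintype.card m :=
  le_antisymm A.rank_le_card_height <| by
    simpa [h, rank_one] using A.rank_submatrix_le id σ

theorem rank_eq_card_width_of_submatrix_eq_one [Fintype n] [DecidableEq n]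
    (A : Matrix m n R) (τ : n → m) (h : A.submatrix τ id = 1) : A.rank = Fintype.card n :=
  le_antisymm A.rank_le_card_width <| by
    simpa [h, rank_one] using A.rank_submatrix_le τ id

end Matrix

theorem exists_embedding_prod_surjective_fst_snd {α β : Type*} [Fintype α] [Fintype β]
    {g : β → α} (hg : Function.Surjective g) {c : ℕ} (hβc : Fintype.card β ≤ c)
    (hc : c ≤ Fintype.card α * Fintype.card β) :
    ∃ e : Fin c ↪ α × β,
      Function.Surjective (Prod.fst ∘ e) ∧ Function.Surjective (Prod.snd ∘ e) := by
  classical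
  set graph := Finset.univ.map ⟨fun y => (g y, y), fun _ _ h => congrArg Prod.snd h⟩
  obtain ⟨S, hgraph, -, hS⟩ := Finset.exists_subsuperset_card_eq (Finset.subset_univ graph)
    (by simpa [graph] using hβc) (by simpa using hc)
  let e : Fin c ↪ α × β := (S.equivFinOfCardEq hS).symm.toEmbedding.trans (.subtype _)
  have mem_range : ∀ y, (g y, y) ∈ Set.range e := fun y =>
    ⟨S.equivFinOfCardEq hS ⟨(g y, y), hgraph (Finset.mem_map_of_mem _ (Finset.mem_univ y))⟩,
      by simp [e]⟩
  refine ⟨e, fun x => ?_, fun y => ?_⟩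
  · obtain ⟨y, rfl⟩ := hg x
    obtain ⟨z, hz⟩ := mem_range y
    exact ⟨z, by simp [hz]⟩
  · obtain ⟨z, hz⟩ := mem_range y
    exact ⟨z, by simp [hz]⟩

section GraphTensor

variable (K : Type*) {α β γ : Type*} [Field K] [DecidableEq α] [DecidableEq β]

def graphTensor (e : γ → α × β) : α → β → γ → K := fun x y z => if e z = (x, y) then 1 else 0

theorem graphTensor_ne_zero [Nonempty γ] (e : γ → α × β) : graphTensor K e ≠ 0 := fun h => by
  obtain ⟨z⟩ := ‹Nonempty γ›
  simpa [graphTensor] using congrFun (congrFun (congrFun h (e z).1) (e z).2) z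

variable {K} [Fintype γ] {e : γ → α × β}

theorem rank_graphTensor_prod [DecidableEq γ] (he : Function.Injective e) :
    (Matrix.of fun (p : α × β) (z : γ) => graphTensor K e p.1 p.2 z).rank = Fintype.card γ := by
  refine rank_eq_card_width_of_submatrix_eq_one _ e ?_
  ext z z'
  simp [graphTensor, one_apply, he.eq_iff, eq_comm]

variable [Fintype α] [Fintype β]

theorem rank_graphTensor_fst (he : Function.Surjective (Prod.fst ∘ e)) :
    (Matrix.of fun (x : α) (p : β × γ) => graphTensor K e x p.1 p.2).rank = Fintype.card α := by
  refine rank_eq_card_height_of_submatrix_eq_one _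
    (fun x => ((e (Function.surjInv he x)).2, Function.surjInv he x)) ?_
  ext x x'
  have hx' : (e (Function.surjInv he x')).1 = x' := Function.surjInv_eq he x'
  simp only [submatrix_apply, of_apply, id, graphTensor, one_apply, Prod.ext_iff, hx', and_true,
    eq_comm (a := x')]

theorem rank_graphTensor_snd (he : Function.Surjective (Prod.snd ∘ e)) :
    (Matrix.of fun (y : β) (p : α × γ) => graphTensor K e p.1 y p.2).rank = Fintype.card β := by
  refine rank_eq_card_height_of_submatrix_eq_one _
    (fun y => ((e (Function.surjInv he y)).1, Function.surjInv he y)) ?_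
  ext y y'
  have hy' : (e (Function.surjInv he y')).2 = y' := Function.surjInv_eq he y'
  simp only [submatrix_apply, of_apply, id, graphTensor, one_apply, Prod.ext_iff, hy', true_and,
    eq_comm (a := y')]

end GraphTensor

/-- For positive integers `a ≤ b ≤ c` with `c ≤ a·b`, there exists a tripartite
pure state with Schmidt ranks `r_A = a`, `r_B = b` and `r_AB = c` (rank across the
`AB : C` bipartition). -/
theorem exists_tripartite_state_with_ranks
    (a b c : ℕ) (ha : 0 < a) (hab : a ≤ b) (hbc : b ≤ c) (hc : c ≤ a * b) :
    ∃ (dA dB dC : ℕ) (ψ : Fin dA → Fin dB → Fin dC → ℂ), ψ ≠ 0 ∧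
      (Matrix.of fun (x : Fin dA) (y : Fin dB × Fin dC) => ψ x y.1 y.2).rank = a ∧
      (Matrix.of fun (x : Fin dB) (y : Fin dA × Fin dC) => ψ y.1 x y.2).rank = b ∧
      (Matrix.of fun (x : Fin dA × Fin dB) (y : Fin dC) => ψ x.1 x.2 y).rank = c := by
  have mod_surjective : Function.Surjective fun y : Fin b => (⟨y % a, Nat.mod_lt _ ha⟩ : Fin a) :=
    fun x => ⟨⟨x, x.2.trans_le hab⟩, Fin.ext (Nat.mod_eq_of_lt x.2)⟩
  obtain ⟨e, hfst, hsnd⟩ := exists_embedding_prod_surjective_fst_snd mod_surjective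
    (by simpa using hbc) (by simpa using hc)
  have rank_A := rank_graphTensor_fst (K := ℂ) hfst
  have rank_B := rank_graphTensor_snd (K := ℂ) hsnd
  have rank_AB := rank_graphTensor_prod (K := ℂ) e.injective
  simp only [Fintype.card_fin] at rank_A rank_B rank_AB
  have : Nonempty (Fin c) := ⟨⟨0, by omega⟩⟩
  exact ⟨a, b, c, graphTensor ℂ e, graphTensor_ne_zero ℂ e, rank_A, rank_B, rank_AB⟩
end

section
/- Let S₁, ..., S_N be nonzero linear maps from H_C to H_D that are pairwise orthogonal with respect to the Hilbert–Schmidt inner product (Tr(S_i† S_j) = 0 for i ≠ j). Then there exists K ≤ N, a rank-K orthogonal projector P on H_C, and a vector |φ⟩ ∈ H_C ⊗ H_C, such that the N vectors (P ⊗ S_k)|φ⟩ ∈ H_C ⊗ H_D are linearly independent. -/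
/-!
Hilbert–Schmidt orthogonality makes the `S k` linearly independent, i.e. the entry functionals
`c ↦ (∑ k, c k • S k) d t` separate the points of `ℂ^N`. A separating family of functionals on an
`N`-dimensional space has a separating subfamily of size at most `N`; the columns `t` it involves
form a set `T` with `#T ≤ N` on which the `S k` stay independent. For the coordinate projection `P`
onto `T` and `φ = ∑ i, |i⟩|i⟩ = vec 1` one has `(P ⊗ S k) φ = vec (S k * Pᵀ) = vec (S k * P)`.
-/

open Matrix Module
open scoped Kronecker ComplexOrder

theorem Module.Dual.exists_finset_card_le_finrank_separating {K V ι : Type*} [Field K]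
    [AddCommGroup V] [Module K V] [FiniteDimensional K V] (φ : ι → Module.Dual K V)
    (hφ : ∀ v, (∀ i, φ i v = 0) → v = 0) :
    ∃ s : Finset ι, s.card ≤ finrank K V ∧ ∀ v, (∀ i ∈ s, φ i v = 0) → v = 0 := by
  classical
  obtain ⟨f, hf_mem, hf_span, -⟩ := Submodule.exists_fun_fin_finrank_span_eq K (Set.range φ)
  choose g hg using hf_mem
  refine ⟨Finset.univ.image g, ?_, fun v hv => hφ v fun i => ?_⟩
  · calc (Finset.univ.image g).card ≤ finrank K (Submodule.span K (Set.range φ)) :=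
          Finset.card_image_le.trans (by simp)
      _ ≤ finrank K (Module.Dual K V) := Submodule.finrank_le _
      _ = finrank K V := Subspace.dual_finrank_eq
  · have hspan : Submodule.span K (Set.range f) ≤ LinearMap.ker (Module.Dual.eval K V v) := by
      rw [Submodule.span_le]
      rintro _ ⟨j, rfl⟩
      simpa [← hg j] using hv (g j) (Finset.mem_image_of_mem g (Finset.mem_univ j))
    have hi : φ i ∈ Submodule.span K (Set.range f) :=
      hf_span.symm ▸ Submodule.subset_span (Set.mem_range_self i)
    simpa using hspan hi

namespace Matrix

theorem linearIndependent_of_trace_conjTranspose_mul_eq_zero {ι m n R : Type*}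
    [Fintype m] [Fintype n] [Field R] [PartialOrder R] [StarRing R] [StarOrderedRing R]
    {S : ι → Matrix m n R} (hne : ∀ i, S i ≠ 0)
    (horth : ∀ i j, i ≠ j → ((S i)ᴴ * S j).trace = 0) :
    LinearIndependent R S := by
  rw [linearIndependent_iff']
  intro s g hg i hi
  have hpair : ((S i)ᴴ * ∑ j ∈ s, g j • S j).trace = g i * ((S i)ᴴ * S i).trace := by
    rw [Matrix.mul_sum, trace_sum, Finset.sum_eq_single_of_mem i hi]
    · simp [trace_smul]
    · intro j _ hji
      simp [trace_smul, horth i j hji.symm]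
  rw [hg, Matrix.mul_zero, trace_zero, eq_comm, mul_eq_zero] at hpair
  exact hpair.resolve_right (trace_conjTranspose_mul_self_eq_zero_iff.not.mpr (hne i))

theorem linearIndependent_vec_iff {ι m n K : Type*} [Field K] {M : ι → Matrix m n K} :
    LinearIndependent K (fun k => vec (M k)) ↔ LinearIndependent K M :=
  LinearMap.linearIndependent_iff
    ((transposeLinearEquiv m n K K).trans (LinearEquiv.curry K K n m).symm).toLinearMap
    (LinearEquiv.ker _)

section CoordinateProjection

variable {n : Type*} [DecidableEq n] (R : Type*)

def coordinateProjection [Zero R] [One R] (T : Finset n) : Matrix n n R :=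
  diagonal fun j => if j ∈ T then 1 else 0

variable {R}

theorem isHermitian_coordinateProjection [Semiring R] [StarRing R] (T : Finset n) :
    (coordinateProjection R T).IsHermitian :=
  isHermitian_diagonal_of_self_adjoint _ <| by
    ext j
    by_cases hj : j ∈ T <;> simp [hj]

theorem transpose_coordinateProjection [Zero R] [One R] (T : Finset n) :
    (coordinateProjection R T)ᵀ = coordinateProjection R T :=
  diagonal_transpose _

variable [Fintype n]

theorem coordinateProjection_mul_self [Semiring R] (T : Finset n) :
    coordinateProjection R T * coordinateProjection R T = coordinateProjection R T := by
  rw [coordinateProjection, diagonal_mul_diagonal]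
  congr 1
  ext j
  split_ifs <;> simp

theorem rank_coordinateProjection [Field R] (T : Finset n) :
    (coordinateProjection R T).rank = T.card := by
  classical
  rw [coordinateProjection, rank_diagonal, Fintype.card_subtype]
  congr 1
  ext j
  by_cases hj : j ∈ T <;> simp [hj]

theorem mul_coordinateProjection_apply {m : Type*} [Semiring R] (A : Matrix m n R)
    (T : Finset n) {i : m} {j : n} (hj : j ∈ T) : (A * coordinateProjection R T) i j = A i j := by
  simp [coordinateProjection, mul_diagonal, hj]

end CoordinateProjection

theorem exists_card_le_linearIndependent_mul_coordinateProjection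
    {ι m n K : Type*} [Fintype ι] [Fintype n] [DecidableEq n] [Field K]
    {S : ι → Matrix m n K} (hS : LinearIndependent K S) :
    ∃ T : Finset n, T.card ≤ Fintype.card ι ∧
      LinearIndependent K (fun k => S k * coordinateProjection K T) := by
  set L := Fintype.linearCombination K S
  have hL : ∀ g, L g = ∑ k, g k • S k := Fintype.linearCombination_apply K S
  rw [Fintype.linearIndependent_iff] at hS
  obtain ⟨s, hs_card, hs_sep⟩ := Module.Dual.exists_finset_card_le_finrank_separating
    (fun p : m × n => entryLinearMap K K p.1 p.2 ∘ₗ L) fun g hg => funext <| hS g <| by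
      ext i j
      simpa [hL, Matrix.sum_apply] using hg (i, j)
  refine ⟨s.image Prod.snd, Finset.card_image_le.trans (by simpa using hs_card), ?_⟩
  rw [Fintype.linearIndependent_iff]
  intro g hg
  refine congrFun (hs_sep g fun p hp => ?_)
  have hsum : ∑ k, g k • (S k * coordinateProjection K (s.image Prod.snd)) =
      L g * coordinateProjection K (s.image Prod.snd) := by
    simp only [hL, Matrix.sum_mul, Matrix.smul_mul]
  have := congrFun (congrFun (hsum ▸ hg) p.1) p.2
  rwa [mul_coordinateProjection_apply _ _ (Finset.mem_image_of_mem _ hp)] at this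

end Matrix

theorem exists_projector_linearIndependent_general
    {C D : Type*} [Fintype C] [Fintype D] [DecidableEq C]
    (N : ℕ) (S : Fin N → Matrix D C ℂ)
    (hne : ∀ k, S k ≠ 0)
    (horth : ∀ i j, i ≠ j → ((S i)ᴴ * S j).trace = 0) :
    ∃ K ≤ N, ∃ P : Matrix C C ℂ,
      P.IsHermitian ∧ P * P = P ∧ P.rank = K ∧
      ∃ φ : C × C → ℂ,
        LinearIndependent ℂ
          (fun k : Fin N => (Matrix.kroneckerMap (· * ·) P (S k)).mulVec φ) := by
  obtain ⟨T, hT_card, hT⟩ := exists_card_le_linearIndependent_mul_coordinateProjection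
    (linearIndependent_of_trace_conjTranspose_mul_eq_zero hne horth)
  refine ⟨T.card, by simpa using hT_card, coordinateProjection ℂ T,
    isHermitian_coordinateProjection T, coordinateProjection_mul_self T,
    rank_coordinateProjection T, vec 1, ?_⟩
  have hvec : ∀ k, (coordinateProjection ℂ T ⊗ₖ S k) *ᵥ vec 1 =
      vec (S k * coordinateProjection ℂ T) := fun k => by
    rw [kronecker_mulVec_vec, Matrix.mul_one, transpose_coordinateProjection]
  simpa only [hvec] using linearIndependent_vec_iff.mpr hT

/-- Let `S₁, …, S_N : H_C → H_D` be nonzero linear maps, pairwise orthogonal in the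
Hilbert–Schmidt inner product.  Then there are `K ≤ N`, a rank-`K` orthogonal
projector `P` on `H_C` and a vector `φ ∈ H_C ⊗ H_C` such that the `N` vectors
`(P ⊗ S_k)|φ⟩ ∈ H_C ⊗ H_D` are linearly independent. -/
theorem exists_projector_linearIndependent
    {C D : Type*} [Fintype C] [Fintype D] [DecidableEq C] [DecidableEq D]
    (N : ℕ) (S : Fin N → Matrix D C ℂ)
    (hne : ∀ k, S k ≠ 0)
    (horth : ∀ i j, i ≠ j → ((S i)ᴴ * S j).trace = 0) :
    ∃ K ≤ N, ∃ P : Matrix C C ℂ,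
      P.IsHermitian ∧ P * P = P ∧ P.rank = K ∧
      ∃ φ : C × C → ℂ,
        LinearIndependent ℂ
          (fun k : Fin N => (Matrix.kroneckerMap (· * ·) P (S k)).mulVec φ) :=
  exists_projector_linearIndependent_general N S hne horth
end

section
/- If a four-party pure state |ψ⟩_{ABCD} has Schmidt rank 1 across the bipartition AD : BC (i.e., r_{AD} = 1), then r_{AB} = r_A · r_B. Consequently, no pure state has 0-entropy vector proportional to (1,1,1,1,1,1,0) in the ordering (S_0(A), S_0(B), S_0(C), S_0(D), S_0(AB), S_0(AC), S_0(AD)). -/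
/-!
A state of Schmidt rank one across `AD : BC` factors as `ψ a b c d = u (a, d) * v (b, c)`.
Writing `U`, `V` for `u`, `v` read as matrices, the reshapings `M_AB`, `M_A`, `M_B` are, up to
reindexing rows and columns, the Kronecker products `U ⊗ V`, `U ⊗ vᵀ`, `V ⊗ uᵀ`. Over a field
the rank is multiplicative under Kronecker products, since `range (f ⊗ g) ≅ range f ⊗ range g`,
and a nonzero row has rank one; hence `r_AB = rank U * rank V = r_A * r_B`. For the entropy
vector, `S₀(AD) = 0` forces `r_AD = 1`, and then `S₀(AB) = S₀(A) + S₀(B) = 2t ≠ t`.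
-/

open Matrix

/-- Reshapings of a four-party state across the seven bipartitions. -/
noncomputable def mA {dA dB dC dD : ℕ} (ψ : Fin dA → Fin dB → Fin dC → Fin dD → ℂ) :
    Matrix (Fin dA) (Fin dB × Fin dC × Fin dD) ℂ :=
  Matrix.of fun a x => ψ a x.1 x.2.1 x.2.2

noncomputable def mB {dA dB dC dD : ℕ} (ψ : Fin dA → Fin dB → Fin dC → Fin dD → ℂ) :
    Matrix (Fin dB) (Fin dA × Fin dC × Fin dD) ℂ :=
  Matrix.of fun b x => ψ x.1 b x.2.1 x.2.2

noncomputable def mC {dA dB dC dD : ℕ} (ψ : Fin dA → Fin dB → Fin dC → Fin dD → ℂ) :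
    Matrix (Fin dC) (Fin dA × Fin dB × Fin dD) ℂ :=
  Matrix.of fun c x => ψ x.1 x.2.1 c x.2.2

noncomputable def mD {dA dB dC dD : ℕ} (ψ : Fin dA → Fin dB → Fin dC → Fin dD → ℂ) :
    Matrix (Fin dD) (Fin dA × Fin dB × Fin dC) ℂ :=
  Matrix.of fun d x => ψ x.1 x.2.1 x.2.2 d

noncomputable def mAB {dA dB dC dD : ℕ} (ψ : Fin dA → Fin dB → Fin dC → Fin dD → ℂ) :
    Matrix (Fin dA × Fin dB) (Fin dC × Fin dD) ℂ :=
  Matrix.of fun p x => ψ p.1 p.2 x.1 x.2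

noncomputable def mAC {dA dB dC dD : ℕ} (ψ : Fin dA → Fin dB → Fin dC → Fin dD → ℂ) :
    Matrix (Fin dA × Fin dC) (Fin dB × Fin dD) ℂ :=
  Matrix.of fun p x => ψ p.1 x.1 p.2 x.2

noncomputable def mAD {dA dB dC dD : ℕ} (ψ : Fin dA → Fin dB → Fin dC → Fin dD → ℂ) :
    Matrix (Fin dA × Fin dD) (Fin dB × Fin dC) ℂ :=
  Matrix.of fun p x => ψ p.1 x.1 x.2 p.2

open Module
open scoped Kronecker

theorem LinearMap.finrank_range_tensorProduct_map {K M N P Q : Type*} [Field K]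
    [AddCommGroup M] [Module K M] [AddCommGroup N] [Module K N]
    [AddCommGroup P] [Module K P] [AddCommGroup Q] [Module K Q]
    (f : M →ₗ[K] P) (g : N →ₗ[K] Q) :
    finrank K (range (TensorProduct.map f g)) = finrank K (range f) * finrank K (range g) := by
  have hfactor : TensorProduct.map f g = TensorProduct.mapIncl (range f) (range g) ∘ₗ
      TensorProduct.map f.rangeRestrict g.rangeRestrict :=
    TensorProduct.ext' fun _ _ => rfl
  rw [hfactor, range_comp_of_range_eq_top _ (range_eq_top.2 (TensorProduct.map_surjective
      f.surjective_rangeRestrict g.surjective_rangeRestrict)),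
    finrank_range_of_inj (Module.Flat.tensorProduct_mapIncl_injective_of_right _ _),
    finrank_tensorProduct]

namespace Matrix

variable {K l m n p : Type*} [Field K]

theorem rank_kronecker [Fintype l] [Fintype m] [Fintype n] [Fintype p]
    (A : Matrix l m K) (B : Matrix n p K) : (A ⊗ₖ B).rank = A.rank * B.rank := by
  classical
  rw [rank_eq_finrank_range_toLin _ ((Pi.basisFun K l).tensorProduct (Pi.basisFun K n))
      ((Pi.basisFun K m).tensorProduct (Pi.basisFun K p)), toLin_kronecker,
    LinearMap.finrank_range_tensorProduct_map, ← rank_eq_finrank_range_toLin,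
    ← rank_eq_finrank_range_toLin]

theorem rank_eq_zero_iff [Fintype n] {A : Matrix m n K} : A.rank = 0 ↔ A = 0 := by
  classical
  rw [rank, Submodule.finrank_eq_zero, LinearMap.range_eq_bot, ← toLin'_apply',
    LinearEquiv.map_eq_zero_iff]

theorem rank_replicateRow_unit [Fintype n] {v : n → K} (hv : v ≠ 0) :
    (replicateRow Unit v).rank = 1 := by
  refine le_antisymm ((rank_le_card_height _).trans_eq Fintype.card_unit) ?_
  rw [Nat.one_le_iff_ne_zero, Ne, rank_eq_zero_iff, ← replicateRow_zero]
  exact fun h => hv (replicateRow_injective h)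

theorem exists_eq_vecMulVec_of_rank_eq_one [Fintype n] {A : Matrix m n K} (h : A.rank = 1) :
    ∃ u v, u ≠ 0 ∧ v ≠ 0 ∧ A = vecMulVec u v := by
  have hA : A ≠ 0 := by simp [← rank_eq_zero_iff, h]
  rw [rank_eq_finrank_span_cols, finrank_eq_one_iff'] at h
  obtain ⟨u, -, hspan⟩ := h
  choose c hc using fun j => hspan ⟨A.col j, Submodule.subset_span (Set.mem_range_self j)⟩
  have hAuc : A = vecMulVec u c := ext fun i j => by
    simpa [vecMulVec_apply, mul_comm] using (congrFun (congrArg Subtype.val (hc j)) i).symm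
  refine ⟨u, c, fun h0 => hA ?_, fun h0 => hA ?_, hAuc⟩ <;> ext i j <;>
    simp [hAuc, vecMulVec_apply, h0]

end Matrix

theorem Nat.eq_one_of_log_eq_zero {n : ℕ} (hn : n ≠ 0) (h : Real.log n = 0) : n = 1 := by
  rcases Real.log_eq_zero.1 h with h | h | h
  · exact absurd (by exact_mod_cast h) hn
  · exact_mod_cast h
  · linarith [n.cast_nonneg (α := ℝ)]

section FourParty

variable {dA dB dC dD : ℕ} {ψ : Fin dA → Fin dB → Fin dC → Fin dD → ℂ}

theorem mAD_ne_zero (hψ : ψ ≠ 0) : mAD ψ ≠ 0 := fun h =>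
  hψ <| funext fun a => funext fun b => funext fun c => funext fun d =>
    congrFun (congrFun h (a, d)) (b, c)

theorem exists_eq_mul_of_rank_mAD_eq_one (h : (mAD ψ).rank = 1) :
    ∃ (u : Fin dA × Fin dD → ℂ) (v : Fin dB × Fin dC → ℂ), u ≠ 0 ∧ v ≠ 0 ∧
      ∀ a b c d, ψ a b c d = u (a, d) * v (b, c) := by
  obtain ⟨u, v, hu, hv, huv⟩ := exists_eq_vecMulVec_of_rank_eq_one h
  exact ⟨u, v, hu, hv, fun a b c d => congrFun (congrFun huv (a, d)) (b, c)⟩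

variable {u : Fin dA × Fin dD → ℂ} {v : Fin dB × Fin dC → ℂ}

theorem rank_mA_of_eq_mul (hψ : ∀ a b c d, ψ a b c d = u (a, d) * v (b, c)) (hv : v ≠ 0) :
    (mA ψ).rank = (of (Function.curry u)).rank := by
  have hreshape : mA ψ = (of (Function.curry u) ⊗ₖ replicateRow Unit v).submatrix
      (Equiv.prodPUnit _).symm
      (⟨fun x => (x.2.2, x.1, x.2.1), fun y => (y.2.1, y.2.2, y.1), fun _ => rfl, fun _ => rfl⟩ :
        _ ≃ _) := by
    ext a ⟨b, c, d⟩
    simp [mA, hψ]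
  rw [hreshape, rank_submatrix, rank_kronecker, rank_replicateRow_unit hv, mul_one]

theorem rank_mB_of_eq_mul (hψ : ∀ a b c d, ψ a b c d = u (a, d) * v (b, c)) (hu : u ≠ 0) :
    (mB ψ).rank = (of (Function.curry v)).rank := by
  have hreshape : mB ψ = (of (Function.curry v) ⊗ₖ replicateRow Unit u).submatrix
      (Equiv.prodPUnit _).symm
      (⟨fun x => (x.2.1, x.1, x.2.2), fun y => (y.2.1, y.1, y.2.2), fun _ => rfl, fun _ => rfl⟩ :
        _ ≃ _) := by
    ext b ⟨a, c, d⟩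
    simp [mB, hψ, mul_comm]
  rw [hreshape, rank_submatrix, rank_kronecker, rank_replicateRow_unit hu, mul_one]

theorem rank_mAB_of_eq_mul (hψ : ∀ a b c d, ψ a b c d = u (a, d) * v (b, c)) :
    (mAB ψ).rank = (of (Function.curry u)).rank * (of (Function.curry v)).rank := by
  have hreshape : mAB ψ = (of (Function.curry u) ⊗ₖ of (Function.curry v)).submatrix
      (Equiv.refl _) (Equiv.prodComm _ _) := by
    ext ⟨a, b⟩ ⟨c, d⟩
    simp [mAB, hψ]
  rw [hreshape, rank_submatrix, rank_kronecker]

end FourParty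

theorem rank_mAB_eq_mul_of_rank_mAD_eq_one {dA dB dC dD : ℕ}
    {ψ : Fin dA → Fin dB → Fin dC → Fin dD → ℂ} (h : (mAD ψ).rank = 1) :
    (mAB ψ).rank = (mA ψ).rank * (mB ψ).rank := by
  obtain ⟨u, v, hu, hv, hψ⟩ := exists_eq_mul_of_rank_mAD_eq_one h
  rw [rank_mAB_of_eq_mul hψ, rank_mA_of_eq_mul hψ hv, rank_mB_of_eq_mul hψ hu]

/-- If a four-party pure state is a product across the `AD : BC` cut
(`r_AD = 1`), then `r_AB = r_A · r_B`.  Consequently, no four-party pure state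
has 0-entropy vector proportional to `(1,1,1,1,1,1,0)` in the ordering
`(S₀(A), S₀(B), S₀(C), S₀(D), S₀(AB), S₀(AC), S₀(AD))`. -/
theorem rank_AB_eq_of_rank_AD_eq_one :
    (∀ (dA dB dC dD : ℕ) (ψ : Fin dA → Fin dB → Fin dC → Fin dD → ℂ), ψ ≠ 0 →
      (mAD ψ).rank = 1 → (mAB ψ).rank = (mA ψ).rank * (mB ψ).rank) ∧
    ¬ ∃ (dA dB dC dD : ℕ) (ψ : Fin dA → Fin dB → Fin dC → Fin dD → ℂ) (t : ℝ),
        ψ ≠ 0 ∧ 0 < t ∧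
        Real.log (mA ψ).rank = t ∧ Real.log (mB ψ).rank = t ∧
        Real.log (mC ψ).rank = t ∧ Real.log (mD ψ).rank = t ∧
        Real.log (mAB ψ).rank = t ∧ Real.log (mAC ψ).rank = t ∧
        Real.log (mAD ψ).rank = 0 := by
  refine ⟨fun _ _ _ _ _ _ => rank_mAB_eq_mul_of_rank_mAD_eq_one, ?_⟩
  rintro ⟨dA, dB, dC, dD, ψ, t, hψ, ht, hA, hB, -, -, hAB, -, hAD⟩
  have hAD₁ : (mAD ψ).rank = 1 :=
    Nat.eq_one_of_log_eq_zero (rank_eq_zero_iff.not.2 (mAD_ne_zero hψ)) hAD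
  have hA₀ : ((mA ψ).rank : ℝ) ≠ 0 := fun h => ht.ne' (by rw [← hA, h, Real.log_zero])
  have hB₀ : ((mB ψ).rank : ℝ) ≠ 0 := fun h => ht.ne' (by rw [← hB, h, Real.log_zero])
  rw [rank_mAB_eq_mul_of_rank_mAD_eq_one hAD₁, Nat.cast_mul, Real.log_mul hA₀ hB₀, hA, hB] at hAB
  linarith
end
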